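/- arXiv:2206.13086 — 2 statements merged into one kernel-verified Lean document; each statement's English description precedes it below -/
import Mathlib

section
/- For every γ ≥ 0 there exists a constant C_1 > 0 depending only on γ such that for every integer d ≥ 1 and all probability vectors p, q ∈ [0,1]^d the following holds: if v̂ ∈ {0,1}^d maximizes v ↦ Dice_γ(v; q) over {0,1}^d and v* ∈ {0,1}^d maximizes v ↦ Dice_γ(v; p) over {0,1}^d, then the excess Dice risk of the plug-in rule satisfies Dice_γ(v*; p) − Dice_γ(v̂; p) ≤ C_1 Σ_{j=1}^{d} |q_j − p_j|. -/
open Finset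

/-- Weight of a binary configuration `y` under independent Bernoulli probabilities `p`. -/
noncomputable def bw {d : ℕ} (p : Fin d → ℝ) (y : Fin d → Bool) : ℝ :=
  ∏ j, if y j = true then p j else 1 - p j

/-- Number of `true` coordinates of `y`. -/
def cnt {d : ℕ} (y : Fin d → Bool) : ℕ :=
  (Finset.univ.filter (fun j => y j = true)).card

/-- The Dice score `Dice_γ(v; p) = E[(2 Σⱼ vⱼ Yⱼ + γ)/(Σⱼ Yⱼ + Σⱼ vⱼ + γ)]`
for independent Bernoulli `Yⱼ` with success probabilities `pⱼ` (convention 0/0 = 0). -/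
noncomputable def dice {d : ℕ} (γ : ℝ) (p : Fin d → ℝ) (v : Fin d → Bool) : ℝ :=
  ∑ y : Fin d → Bool, bw p y *
    ((2 * ((Finset.univ.filter (fun j => v j = true ∧ y j = true)).card : ℝ) + γ) /
      ((cnt y : ℝ) + (cnt v : ℝ) + γ))

/-!
The Dice score is the expectation, under the product Bernoulli law with parameters `p`, of a
ratio lying in `[0, 1]`. Hence replacing `p` by `q` moves every Dice score by at most the
`ℓ¹` distance between the two product laws, which is at most `2 Σⱼ |qⱼ - pⱼ|` because total
variation is subadditive over products. A maximizer of the perturbed objective `Dice(·; q)`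
loses at most twice a uniform perturbation, so `C₁ = 4` works.
-/

theorem Fin.sum_univ_pi_succ {n : ℕ} {κ M : Type*} [Fintype κ] [AddCommMonoid M]
    (F : (Fin (n + 1) → κ) → M) :
    ∑ x, F x = ∑ k, ∑ y : Fin n → κ, F (Fin.cons k y) := by
  rw [← Fintype.sum_prod_type']
  exact Fintype.sum_equiv (Fin.consEquiv fun _ => κ).symm _ _ fun x => by simp

theorem sum_prod_eq_one {ι κ : Type*} [Fintype ι] [DecidableEq ι] [Fintype κ]
    (μ : ι → κ → ℝ) (hμ : ∀ i, ∑ k, μ i k = 1) :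
    ∑ x : ι → κ, ∏ i, μ i (x i) = 1 := by
  rw [← Fintype.prod_sum]; simp [hμ]

theorem sum_abs_prod_sub_prod_le {κ : Type*} [Fintype κ] :
    ∀ {n : ℕ} (μ ν : Fin n → κ → ℝ), (∀ i k, 0 ≤ μ i k) → (∀ i k, 0 ≤ ν i k) →
      (∀ i, ∑ k, μ i k = 1) → (∀ i, ∑ k, ν i k = 1) →
      ∑ x : Fin n → κ, |∏ i, μ i (x i) - ∏ i, ν i (x i)| ≤ ∑ i, ∑ k, |μ i k - ν i k|
  | 0, _, _, _, _, _, _ => by simp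
  | n + 1, μ, ν, hμ, hν, hμ1, hν1 => by
    set A : (Fin n → κ) → ℝ := fun y => ∏ i, μ i.succ (y i)
    set B : (Fin n → κ) → ℝ := fun y => ∏ i, ν i.succ (y i)
    have hB : ∀ y, 0 ≤ B y := fun y => prod_nonneg fun i _ => hν _ _
    have hB1 : ∑ y, B y = 1 := sum_prod_eq_one _ fun i => hν1 i.succ
    have ih : ∑ y, |A y - B y| ≤ ∑ i : Fin n, ∑ k, |μ i.succ k - ν i.succ k| :=
      sum_abs_prod_sub_prod_le _ _ (fun i => hμ i.succ) (fun i => hν i.succ)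
        (fun i => hμ1 i.succ) (fun i => hν1 i.succ)
    have hsplit : ∀ k y,
        |μ 0 k * A y - ν 0 k * B y| ≤ μ 0 k * |A y - B y| + |μ 0 k - ν 0 k| * B y := by
      intro k y
      calc |μ 0 k * A y - ν 0 k * B y|
          = |μ 0 k * (A y - B y) + (μ 0 k - ν 0 k) * B y| := by congr 1; ring
        _ ≤ _ := by
          refine (abs_add_le _ _).trans ?_
          rw [abs_mul, abs_mul, abs_of_nonneg (hμ 0 k), abs_of_nonneg (hB y)]
    calc ∑ x : Fin (n + 1) → κ, |∏ i, μ i (x i) - ∏ i, ν i (x i)|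
        = ∑ k, ∑ y, |μ 0 k * A y - ν 0 k * B y| := by
          rw [Fin.sum_univ_pi_succ]; simp [Fin.prod_univ_succ, A, B]
      _ ≤ ∑ k, ∑ y, (μ 0 k * |A y - B y| + |μ 0 k - ν 0 k| * B y) :=
          sum_le_sum fun k _ => sum_le_sum fun y _ => hsplit k y
      _ = (∑ k, μ 0 k) * ∑ y, |A y - B y| + (∑ k, |μ 0 k - ν 0 k|) * ∑ y, B y := by
          simp only [sum_add_distrib, ← mul_sum, ← sum_mul]
      _ ≤ ∑ i, ∑ k, |μ i k - ν i k| := by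
          rw [hμ1, hB1, Fin.sum_univ_succ]; linarith

theorem sum_abs_bw_sub_bw_le {d : ℕ} {p q : Fin d → ℝ}
    (hp : ∀ j, p j ∈ Set.Icc (0 : ℝ) 1) (hq : ∀ j, q j ∈ Set.Icc (0 : ℝ) 1) :
    ∑ y, |bw p y - bw q y| ≤ 2 * ∑ j, |q j - p j| := by
  have hbern : ∀ {r : Fin d → ℝ}, (∀ j, r j ∈ Set.Icc (0 : ℝ) 1) →
      ∀ j b, 0 ≤ if b = true then r j else 1 - r j := by
    intro r hr j b
    cases b <;> simp [(hr j).1, (hr j).2]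
  calc ∑ y, |bw p y - bw q y|
      ≤ ∑ j, ∑ b : Bool,
          |(if b = true then p j else 1 - p j) - if b = true then q j else 1 - q j| :=
        sum_abs_prod_sub_prod_le (fun j b => if b = true then p j else 1 - p j)
          (fun j b => if b = true then q j else 1 - q j) (hbern hp) (hbern hq)
          (fun j => by simp) (fun j => by simp)
    _ = 2 * ∑ j, |q j - p j| := by
        rw [mul_sum]
        refine sum_congr rfl fun j _ => ?_
        simp only [Fintype.sum_bool, if_true, Bool.false_eq_true, if_false,
          sub_sub_sub_cancel_left, abs_sub_comm (p j)]
        ring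

noncomputable def diceRatio {d : ℕ} (γ : ℝ) (v y : Fin d → Bool) : ℝ :=
  (2 * ((Finset.univ.filter (fun j => v j = true ∧ y j = true)).card : ℝ) + γ) /
    ((cnt y : ℝ) + (cnt v : ℝ) + γ)

theorem abs_diceRatio_le_one {d : ℕ} {γ : ℝ} (hγ : 0 ≤ γ) (v y : Fin d → Bool) :
    |diceRatio γ v y| ≤ 1 := by
  have hy : #{j | v j = true ∧ y j = true} ≤ cnt y := card_le_card fun j => by simp_all
  have hv : #{j | v j = true ∧ y j = true} ≤ cnt v := card_le_card fun j => by simp_all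
  rw [diceRatio, abs_of_nonneg (by positivity)]
  refine div_le_one_of_le₀ ?_ (by positivity)
  have := (Nat.cast_le (α := ℝ)).2 hy
  have := (Nat.cast_le (α := ℝ)).2 hv
  linarith

theorem abs_dice_sub_dice_le {d : ℕ} {γ : ℝ} (hγ : 0 ≤ γ) {p q : Fin d → ℝ}
    (hp : ∀ j, p j ∈ Set.Icc (0 : ℝ) 1) (hq : ∀ j, q j ∈ Set.Icc (0 : ℝ) 1) (v : Fin d → Bool) :
    |dice γ p v - dice γ q v| ≤ 2 * ∑ j, |q j - p j| :=
  calc |dice γ p v - dice γ q v|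
      = |∑ y, (bw p y - bw q y) * diceRatio γ v y| := by
        rw [dice, dice, ← sum_sub_distrib]; simp only [diceRatio, sub_mul]
    _ ≤ ∑ y, |bw p y - bw q y| := by
        refine (abs_sum_le_sum_abs _ _).trans (sum_le_sum fun y _ => ?_)
        rw [abs_mul]
        exact mul_le_of_le_one_right (abs_nonneg _) (abs_diceRatio_le_one hγ v y)
    _ ≤ 2 * ∑ j, |q j - p j| := sum_abs_bw_sub_bw_le hp hq

theorem sub_le_two_mul_of_forall_abs_sub_le {α : Type*} {F G : α → ℝ} {a b : α} {ε : ℝ}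
    (hb : ∀ w, G w ≤ G b) (hFG : ∀ w, |F w - G w| ≤ ε) : F a - F b ≤ 2 * ε := by
  have ha := (abs_le.1 (hFG a)).2
  have hb' := (abs_le.1 (hFG b)).1
  linarith [hb a]

/-- **Excess Dice risk of the plug-in (RankDice) rule.** For every `γ ≥ 0` there is a
constant `C₁ > 0` depending only on `γ` such that for all `d ≥ 1` and all probability
vectors `p, q ∈ [0,1]^d`: if `v̂` maximizes `Dice_γ(·; q)` and `v*` maximizes
`Dice_γ(·; p)` over `{0,1}^d`, then
`Dice_γ(v*; p) - Dice_γ(v̂; p) ≤ C₁ Σⱼ |qⱼ - pⱼ|`. -/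
theorem dice_excess_risk_bound (γ : ℝ) (hγ : 0 ≤ γ) :
    ∃ C1 : ℝ, 0 < C1 ∧ ∀ d : ℕ, 1 ≤ d → ∀ p q : Fin d → ℝ,
      (∀ j, p j ∈ Set.Icc (0 : ℝ) 1) → (∀ j, q j ∈ Set.Icc (0 : ℝ) 1) →
      ∀ vhat vstar : Fin d → Bool,
        (∀ w : Fin d → Bool, dice γ q w ≤ dice γ q vhat) →
        (∀ w : Fin d → Bool, dice γ p w ≤ dice γ p vstar) →
        dice γ p vstar - dice γ p vhat ≤ C1 * ∑ j, |q j - p j| := by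
  refine ⟨4, by norm_num, fun d _ p q hp hq vhat vstar hhat _ => ?_⟩
  have hexcess := sub_le_two_mul_of_forall_abs_sub_le (a := vstar) hhat
    (abs_dice_sub_dice_le hγ hp hq)
  linarith
end

section
/- Let ζ_0, ζ_1, …, ζ_{d−1} be a positive nondecreasing sequence of reals, and for j ∈ {1,…,d} define Q_j = Σ_{l=0}^{d−1} P(Γ_{∖j} = l)/ζ_l. Then for any two indices j, j', the difference Q_j − Q_{j'} has the same sign as p_j − p_{j'}; in particular, if p_1 ≥ p_2 ≥ ⋯ ≥ p_d then Q_1 ≥ Q_2 ≥ ⋯ ≥ Q_d. -/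
open Finset

/-!
Conditioning on the Bernoulli variables other than `B_j` and `B_{j'}`, with `Γ` their sum,
`Q_j = E[(1 - p_{j'}) f(Γ) + p_{j'} f(Γ + 1)]` for `f l = 1/ζ_l`, and symmetrically for `Q_{j'}`.
Hence `Q_j - Q_{j'} = (p_j - p_{j'}) E[f(Γ) - f(Γ + 1)]`, and the expectation is nonnegative
because `f` is nonincreasing.
-/

/-- `P(Γ_S = l)` where `Γ_S = Σ_{j ∈ S} Bⱼ` is a Poisson-binomial random variable with
independent Bernoulli summands of success probabilities `pⱼ`. -/
noncomputable def pmfOn {d : ℕ} (S : Finset (Fin d)) (p : Fin d → ℝ) (l : ℕ) : ℝ :=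
  ∑ y : Fin d → Bool,
    if (∀ j, j ∉ S → y j = false) ∧ (S.filter (fun j => y j = true)).card = l then
      ∏ j ∈ S, (if y j = true then p j else 1 - p j)
    else 0

/-- `Q_j = Σ_{l=0}^{d-1} P(Γ_{∖j} = l)/ζ_l`, where `Γ_{∖j} = Σ_{i ≠ j} Bᵢ`. -/
noncomputable def Qscore {d : ℕ} (p : Fin d → ℝ) (ζ : ℕ → ℝ) (j : Fin d) : ℝ :=
  ∑ l ∈ Finset.range d, pmfOn (Finset.univ.erase j) p l / ζ l

section PoissonBinomial

variable {ι : Type*} [DecidableEq ι] {p : ι → ℝ}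

variable (p) in
/-- The probability that, among the `B_j` with `j ∈ S`, exactly those with `j ∈ A` are `1`. -/
noncomputable def bernoulliWeight (S A : Finset ι) : ℝ :=
  ∏ j ∈ S, if j ∈ A then p j else 1 - p j

variable (p) in
/-- `E[f(Γ_S)]`, as a sum over the set `A ⊆ S` of successes. -/
noncomputable def poissonBinomialExpect (S : Finset ι) (f : ℕ → ℝ) : ℝ :=
  ∑ A ∈ S.powerset, bernoulliWeight p S A * f A.card

lemma bernoulliWeight_nonneg {S : Finset ι} (hp : ∀ i ∈ S, p i ∈ Set.Icc (0 : ℝ) 1)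
    (A : Finset ι) : 0 ≤ bernoulliWeight p S A :=
  prod_nonneg fun j hj => by
    obtain ⟨h0, h1⟩ := hp j hj
    split_ifs <;> linarith

lemma bernoulliWeight_insert_of_subset {a : ι} {T A : Finset ι} (ha : a ∉ T) (hA : A ⊆ T) :
    bernoulliWeight p (insert a T) A = (1 - p a) * bernoulliWeight p T A := by
  rw [bernoulliWeight, prod_insert ha, if_neg fun h => ha (hA h), bernoulliWeight]

lemma bernoulliWeight_insert_insert {a : ι} {T : Finset ι} (ha : a ∉ T) (A : Finset ι) :
    bernoulliWeight p (insert a T) (insert a A) = p a * bernoulliWeight p T A := by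
  rw [bernoulliWeight, prod_insert ha, if_pos (mem_insert_self a A), bernoulliWeight]
  congr 1
  refine prod_congr rfl fun j hj => ?_
  simp only [mem_insert, ne_of_mem_of_not_mem hj ha, false_or]

theorem poissonBinomialExpect_insert {a : ι} {T : Finset ι} (ha : a ∉ T) (f : ℕ → ℝ) :
    poissonBinomialExpect p (insert a T) f =
      (1 - p a) * poissonBinomialExpect p T f +
        p a * poissonBinomialExpect p T (fun l => f (l + 1)) := by
  rw [poissonBinomialExpect, sum_powerset_insert ha, poissonBinomialExpect,
    poissonBinomialExpect, mul_sum, mul_sum]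
  congr 1 <;> refine sum_congr rfl fun A hA => ?_
  · rw [bernoulliWeight_insert_of_subset ha (mem_powerset.1 hA), mul_assoc]
  · rw [bernoulliWeight_insert_insert ha,
      card_insert_of_notMem fun h => ha (mem_powerset.1 hA h), mul_assoc]

theorem poissonBinomialExpect_mono {S : Finset ι} (hp : ∀ i ∈ S, p i ∈ Set.Icc (0 : ℝ) 1)
    {f g : ℕ → ℝ} (hfg : ∀ l ≤ S.card, f l ≤ g l) :
    poissonBinomialExpect p S f ≤ poissonBinomialExpect p S g :=
  sum_le_sum fun A hA => mul_le_mul_of_nonneg_left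
    (hfg _ (card_le_card (mem_powerset.1 hA))) (bernoulliWeight_nonneg hp A)

theorem poissonBinomialExpect_insert_sub_insert {a b : ι} {T : Finset ι} (ha : a ∉ T)
    (hb : b ∉ T) (f : ℕ → ℝ) :
    poissonBinomialExpect p (insert b T) f - poissonBinomialExpect p (insert a T) f =
      (p a - p b) *
        (poissonBinomialExpect p T f - poissonBinomialExpect p T (fun l => f (l + 1))) := by
  rw [poissonBinomialExpect_insert ha, poissonBinomialExpect_insert hb]
  ring

theorem poissonBinomialExpect_insert_le_insert {a b : ι} {T : Finset ι} (ha : a ∉ T)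
    (hb : b ∉ T) (hp : ∀ i ∈ T, p i ∈ Set.Icc (0 : ℝ) 1) {f : ℕ → ℝ}
    (hf : ∀ l ≤ T.card, f (l + 1) ≤ f l) (hab : p b ≤ p a) :
    poissonBinomialExpect p (insert a T) f ≤ poissonBinomialExpect p (insert b T) f := by
  rw [← sub_nonneg, poissonBinomialExpect_insert_sub_insert ha hb]
  exact mul_nonneg (sub_nonneg.2 hab) (sub_nonneg.2 (poissonBinomialExpect_mono hp hf))

end PoissonBinomial

lemma pmfOn_eq_sum_powersetCard {d : ℕ} (S : Finset (Fin d)) (p : Fin d → ℝ) (l : ℕ) :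
    pmfOn S p l = ∑ A ∈ S.powersetCard l, bernoulliWeight p S A := by
  rw [pmfOn, ← sum_filter]
  refine sum_nbij' (fun y => S.filter (y · = true)) (fun A i => decide (i ∈ A))
    ?_ ?_ ?_ ?_ ?_
  · intro y hy
    simp only [mem_filter, mem_univ, true_and] at hy
    simp [mem_powersetCard, hy.2]
  · intro A hA
    rw [mem_powersetCard] at hA
    simp only [mem_filter, mem_univ, true_and, decide_eq_true_eq, decide_eq_false_iff_not]
    exact ⟨fun i hi hiA => hi (hA.1 hiA), by rw [filter_mem_eq_inter, inter_eq_right.2 hA.1, hA.2]⟩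
  · intro y hy
    simp only [mem_filter, mem_univ, true_and] at hy
    funext i
    by_cases hi : i ∈ S
    · simp [hi]
    · simp [hi, hy.1 i hi]
  · intro A hA
    rw [mem_powersetCard] at hA
    simp only [decide_eq_true_eq]
    rw [filter_mem_eq_inter, inter_eq_right.2 hA.1]
  · intro y _
    exact prod_congr rfl fun j hj => by simp [hj]

lemma sum_range_pmfOn_mul {d n : ℕ} (S : Finset (Fin d)) (p : Fin d → ℝ) (f : ℕ → ℝ)
    (hn : S.card < n) :
    ∑ l ∈ range n, pmfOn S p l * f l = poissonBinomialExpect p S f := by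
  calc ∑ l ∈ range n, pmfOn S p l * f l
      = ∑ l ∈ range n, ∑ A ∈ S.powerset with A.card = l, bernoulliWeight p S A * f A.card := by
        refine sum_congr rfl fun l _ => ?_
        rw [pmfOn_eq_sum_powersetCard, powersetCard_eq_filter, sum_mul]
        exact sum_congr rfl fun A hA => by rw [(mem_filter.1 hA).2]
    _ = _ := sum_fiberwise_of_maps_to
        (fun A hA => mem_range.2 ((card_le_card (mem_powerset.1 hA)).trans_lt hn)) _

lemma Qscore_eq_poissonBinomialExpect {d : ℕ} (p : Fin d → ℝ) (ζ : ℕ → ℝ) (j : Fin d) :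
    Qscore p ζ j = poissonBinomialExpect p (univ.erase j) (fun l => (ζ l)⁻¹) := by
  rw [Qscore, ← sum_range_pmfOn_mul _ _ _ (n := d)]
  · simp only [div_eq_mul_inv]
  · rw [card_erase_of_mem (mem_univ j), card_univ, Fintype.card_fin]
    exact Nat.sub_lt j.pos one_pos

theorem Qscore_monotone_general {d : ℕ} (p : Fin d → ℝ)
    (hp : ∀ i, p i ∈ Set.Icc (0 : ℝ) 1) (ζ : ℕ → ℝ)
    (hζpos : ∀ l, l < d → 0 < ζ l)
    (hζmono : ∀ k l, k ≤ l → l < d → ζ k ≤ ζ l) :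
    (∀ j j' : Fin d, p j' ≤ p j → Qscore p ζ j' ≤ Qscore p ζ j) ∧
    (Antitone p → Antitone (Qscore p ζ)) := by
  have key : ∀ j j' : Fin d, p j' ≤ p j → Qscore p ζ j' ≤ Qscore p ζ j := by
    intro j j' hle
    obtain rfl | hne := eq_or_ne j j'
    · rfl
    set T := (univ.erase j).erase j' with hT
    have hjT : j ∉ T := by simp [T]
    have hj'T : j' ∉ T := by simp [T]
    have hj : univ.erase j = insert j' T := by simp [T, insert_erase, hne.symm]
    have hj' : univ.erase j' = insert j T := by
      rw [hT, erase_right_comm, insert_erase (mem_erase.2 ⟨hne, mem_univ j⟩)]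
    have hTcard : T.card + 2 = d := by
      rw [hT, card_erase_of_mem (by simp [hne.symm]), card_erase_of_mem (mem_univ j), card_univ,
        Fintype.card_fin]
      omega
    rw [Qscore_eq_poissonBinomialExpect, Qscore_eq_poissonBinomialExpect, hj, hj']
    refine poissonBinomialExpect_insert_le_insert hjT hj'T (fun i _ => hp i) (fun l hl => ?_) hle
    exact inv_anti₀ (hζpos l (by omega)) (hζmono l (l + 1) (by omega) (by omega))
  exact ⟨key, fun h j j' hjj' => key _ _ (h hjj')⟩

/-- **Monotonicity of the leave-one-out scores.** For a positive nondecreasing sequence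
`ζ_0, …, ζ_{d-1}`, the difference `Q_j - Q_{j'}` has the same (weak) sign as
`p_j - p_{j'}`: if `p_{j'} ≤ p_j` then `Q_{j'} ≤ Q_j`; in particular, if
`p_1 ≥ p_2 ≥ ⋯ ≥ p_d` then `Q_1 ≥ Q_2 ≥ ⋯ ≥ Q_d`. -/
theorem Qscore_monotone {d : ℕ} (hd : 2 ≤ d) (p : Fin d → ℝ)
    (hp : ∀ i, p i ∈ Set.Icc (0 : ℝ) 1) (ζ : ℕ → ℝ)
    (hζpos : ∀ l, l < d → 0 < ζ l)
    (hζmono : ∀ k l, k ≤ l → l < d → ζ k ≤ ζ l) :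
    (∀ j j' : Fin d, p j' ≤ p j → Qscore p ζ j' ≤ Qscore p ζ j) ∧
    (Antitone p → Antitone (Qscore p ζ)) :=
  Qscore_monotone_general p hp ζ hζpos hζmono
end
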